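/- arXiv:2401.16993 — 2 statements merged into one kernel-verified Lean document; each statement's English description precedes it below -/
import Mathlib

section
/- Let m and p be positive integers, and over 𝔽₂ let Z be an m × m matrix, A₂ an m × p matrix, B₃ a p × m matrix, and A₄, B₄ p × p matrices. Suppose B₁ := Z + A₂ * B₃ is invertible. Then there exist a p × m matrix A₃ and a p × p matrix D such that, setting B₂ := A₂ * B₄, A := fromBlocks 1 A₂ A₃ A₄, and B := fromBlocks B₁ B₂ B₃ B₄, one has A * B = fromBlocks Z 0 0 D. -/
open Matrix

lemma add_self_zmod2 {a b : ℕ} (X : Matrix (Fin a) (Fin b) (ZMod 2)) : X + X = 0 := by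
  have h : ∀ x : ZMod 2, x + x = 0 := by decide
  ext i j
  simpa using h (X i j)

/-- Choosing `A₂, B₃, B₄, A₄` arbitrarily, with `B₁ = Z + A₂ * B₃` invertible, one
can find `A₃` and `D` satisfying the private-key condition `A * B = diag(Z, D)`. -/
theorem stmt_6 (m p : ℕ) (hm : 0 < m) (hp : 0 < p)
    (Z : Matrix (Fin m) (Fin m) (ZMod 2))
    (A₂ : Matrix (Fin m) (Fin p) (ZMod 2))
    (B₃ : Matrix (Fin p) (Fin m) (ZMod 2))
    (A₄ B₄ : Matrix (Fin p) (Fin p) (ZMod 2))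
    (hB₁ : IsUnit (Z + A₂ * B₃)) :
    ∃ (A₃ : Matrix (Fin p) (Fin m) (ZMod 2)) (D : Matrix (Fin p) (Fin p) (ZMod 2)),
      Matrix.fromBlocks (1 : Matrix (Fin m) (Fin m) (ZMod 2)) A₂ A₃ A₄ *
          Matrix.fromBlocks (Z + A₂ * B₃) (A₂ * B₄) B₃ B₄ =
        Matrix.fromBlocks Z 0 0 D := by
  have hinv : (↑hB₁.unit⁻¹ : Matrix (Fin m) (Fin m) (ZMod 2)) * (Z + A₂ * B₃) = 1 :=
    hB₁.val_inv_mul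
  refine ⟨A₄ * B₃ * (↑hB₁.unit⁻¹ : Matrix (Fin m) (Fin m) (ZMod 2)),
    A₄ * B₃ * (↑hB₁.unit⁻¹ : Matrix (Fin m) (Fin m) (ZMod 2)) * (A₂ * B₄) + A₄ * B₄, ?_⟩
  rw [fromBlocks_multiply]
  simp only [Matrix.one_mul]
  rw [Matrix.mul_assoc (A₄ * B₃) _ (Z + A₂ * B₃), hinv, Matrix.mul_one,
    add_self_zmod2, add_self_zmod2,
    add_assoc Z, add_self_zmod2, add_zero]
end

section
/- Let m, p, s be positive integers. Over 𝔽₂, let B be an (m+p) × (m+p) matrix (indexed by Fin m ⊕ Fin p), Z an m × m matrix, D a p × p matrix, A₂ an m × p matrix, A₃ a p × m matrix, A₄ a p × p matrix, and set A = fromBlocks 1 A₂ A₃ A₄; assume A * B = fromBlocks Z 0 0 D. Let C₁ be an m × s matrix, C₂ a p × s matrix, P = B * fromRows C₁ C₂, let u : Fin s → 𝔽₂ be any vector (representing c + e₁ + r₁), and let w : (Fin m ⊕ Fin p) → 𝔽₂ be a vector (representing e₂ + r₂) whose restriction to the Fin p (inr) component is zero. Define the public message vector mₖ = P *ᵥ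 u + w. Then the restriction of A *ᵥ mₖ to the Fin m (inl) component equals (Z * C₁) *ᵥ u + (w ∘ Sum.inl). -/
open Matrix

/-- Decryption correctness: applying the private matrix `A` to Bob's public message
`mₖ = P *ᵥ u + w` (where `u` represents `c + e₁ + r₁` and `w` represents `e₂ + r₂`,
supported on the first block) and keeping the first `m` coordinates yields
`(Z * C₁) *ᵥ u + (w ∘ Sum.inl)`. -/
theorem stmt_9 (m p s : ℕ) (hm : 0 < m) (hp : 0 < p) (hs : 0 < s)
    (B : Matrix (Fin m ⊕ Fin p) (Fin m ⊕ Fin p) (ZMod 2))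
    (Z : Matrix (Fin m) (Fin m) (ZMod 2))
    (D : Matrix (Fin p) (Fin p) (ZMod 2))
    (A₂ : Matrix (Fin m) (Fin p) (ZMod 2))
    (A₃ : Matrix (Fin p) (Fin m) (ZMod 2))
    (A₄ : Matrix (Fin p) (Fin p) (ZMod 2))
    (A : Matrix (Fin m ⊕ Fin p) (Fin m ⊕ Fin p) (ZMod 2))
    (hA : A = Matrix.fromBlocks (1 : Matrix (Fin m) (Fin m) (ZMod 2)) A₂ A₃ A₄)
    (hAB : A * B = Matrix.fromBlocks Z 0 0 D)
    (C₁ : Matrix (Fin m) (Fin s) (ZMod 2))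
    (C₂ : Matrix (Fin p) (Fin s) (ZMod 2))
    (P : Matrix (Fin m ⊕ Fin p) (Fin s) (ZMod 2))
    (hP : P = B * Matrix.fromRows C₁ C₂)
    (u : Fin s → ZMod 2)
    (w : Fin m ⊕ Fin p → ZMod 2)
    (hw : w ∘ Sum.inr = 0)
    (mₖ : Fin m ⊕ Fin p → ZMod 2)
    (hmₖ : mₖ = P *ᵥ u + w) :
    (A *ᵥ mₖ) ∘ Sum.inl = (Z * C₁) *ᵥ u + (w ∘ Sum.inl) := by
  have hAP : A * P = Matrix.fromRows (Z * C₁) (D * C₂) := by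
    rw [hP, ← Matrix.mul_assoc, hAB, Matrix.fromBlocks_mul_fromRows]
    simp
  funext i
  have h1 : (A *ᵥ mₖ) (Sum.inl i) = ((A * P) *ᵥ u) (Sum.inl i) + (A *ᵥ w) (Sum.inl i) := by
    rw [hmₖ, Matrix.mulVec_add, Matrix.mulVec_mulVec]
    rfl
  have h2 : (A *ᵥ w) (Sum.inl i) = w (Sum.inl i) := by
    rw [hA]
    have : w = Sum.elim (w ∘ Sum.inl) (w ∘ Sum.inr) := by funext x; cases x <;> rfl
    rw [this, Matrix.fromBlocks_mulVec]
    simp [hw]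
  simp [h1, h2, hAP, Matrix.fromRows_mulVec]
end
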